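/- Let k ≥ 2 be an integer and let x₀, x₁, x₂ be i.i.d. random variables uniformly distributed on {1, 2, ..., k}. Then E(|x₁ - x₀| · |x₂ - x₁|²) = (k - 1)(k + 1)(11k² - 14)/(180k). -/

import Mathlib

open MeasureTheory ProbabilityTheory
open scoped ENNReal

/-- The uniform probability measure on the integers `{1, ..., k}` (as a measure on `ℕ`). -/
noncomputable def unifMeasure (k : ℕ) : Measure ℕ :=
  (k : ℝ≥0∞)⁻¹ • ∑ i ∈ Finset.Icc 1 k, Measure.dirac i

/-!
By independence the joint law of `(x₀, x₁, x₂)` is the uniform measure on `{1, ..., k}³`, so the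
expectation is `k⁻³ ∑_{a,b,c} |b - a| |c - b|²`. For fixed middle letter `b` the sum factors as
`(∑_a |b - a|) (∑_c (c - b)²)`, a polynomial of degree four in `b`, and summing it over `b` with
Faulhaber's formulas gives `k² (k - 1)(k + 1)(11k² - 14) / 180`.
-/

open Finset

section Measures

variable {α β : Type*} [MeasurableSpace α] [MeasurableSpace β]

lemma MeasureTheory.Measure.finsetSum_dirac_prod_finsetSum_dirac (s : Finset α) (t : Finset β) :
    (∑ i ∈ s, Measure.dirac i).prod (∑ j ∈ t, Measure.dirac j)
      = ∑ p ∈ s ×ˢ t, Measure.dirac p := by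
  ext u hu
  rw [prod_apply hu, lintegral_finsetSum_measure, finsetSum_apply, sum_product]
  refine Finset.sum_congr rfl fun i _ => ?_
  rw [lintegral_dirac' _ (measurable_measure_prodMk_left hu), finsetSum_apply]
  refine Finset.sum_congr rfl fun j _ => ?_
  rw [dirac_apply' _ (measurable_prodMk_left hu), dirac_apply' _ hu]
  rfl

lemma MeasureTheory.integral_smul_finsetSum_dirac [MeasurableSingletonClass α] {E : Type*}
    [NormedAddCommGroup E] [NormedSpace ℝ E] [CompleteSpace E]
    (c : ℝ≥0∞) (s : Finset α) (f : α → E) :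
    ∫ a, f a ∂(c • ∑ i ∈ s, Measure.dirac i) = c.toReal • ∑ i ∈ s, f i := by
  rw [integral_smul_measure,
    integral_finsetSum_measure fun i _ => (integrable_const (f i)).congr (ae_eq_dirac f).symm]
  simp_rw [integral_dirac]

lemma ProbabilityTheory.iIndepFun.map_fin_three_eq_prod {Ω : Type*} [MeasurableSpace Ω]
    {μ : Measure Ω} [IsFiniteMeasure μ] {x : Fin 3 → Ω → α} (hindep : iIndepFun x μ)
    (hmeas : ∀ i, Measurable (x i)) :
    μ.map (fun ω => (x 0 ω, x 1 ω, x 2 ω))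
      = (μ.map (x 0)).prod ((μ.map (x 1)).prod (μ.map (x 2))) := by
  have h12 : μ.map (fun ω => (x 1 ω, x 2 ω)) = (μ.map (x 1)).prod (μ.map (x 2)) :=
    (hindep.indepFun (by decide)).map_prod_eq_prod_map_map
      (hmeas 1).aemeasurable (hmeas 2).aemeasurable
  rw [← h12]
  exact (hindep.indepFun_prodMk hmeas 1 2 0 (by decide) (by decide)).symm
    |>.map_prod_eq_prod_map_map (hmeas 0).aemeasurable ((hmeas 1).prodMk (hmeas 2)).aemeasurable

end Measures

lemma integral_unifMeasure_prod_prod (k : ℕ) (f : ℕ × ℕ × ℕ → ℝ) :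
    ∫ p, f p ∂(unifMeasure k).prod ((unifMeasure k).prod (unifMeasure k))
      = ((k : ℝ)⁻¹) ^ 3 * ∑ a ∈ Icc 1 k, ∑ b ∈ Icc 1 k, ∑ c ∈ Icc 1 k, f (a, b, c) := by
  simp only [unifMeasure, Measure.prod_smul_left, Measure.prod_smul_right,
    Measure.finsetSum_dirac_prod_finsetSum_dirac, smul_smul]
  rw [integral_smul_finsetSum_dirac]
  simp only [sum_product, smul_eq_mul, ENNReal.toReal_mul,
    ENNReal.toReal_inv, ENNReal.toReal_natCast]
  ring

lemma sum_Icc_natCast (n : ℕ) : ∑ a ∈ Icc 1 n, (a : ℝ) = n * (n + 1) / 2 := by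
  induction n with
  | zero => simp
  | succ n ih =>
    rw [sum_Icc_succ_top (by omega), ih]
    push_cast
    ring

lemma sum_Icc_quartic (c₄ c₃ c₂ c₁ c₀ : ℝ) (n : ℕ) :
    ∑ b ∈ Icc 1 n, (c₄ * (b : ℝ) ^ 4 + c₃ * (b : ℝ) ^ 3 + c₂ * (b : ℝ) ^ 2 + c₁ * b + c₀)
      = c₄ * ((n : ℝ) ^ 5 / 5 + (n : ℝ) ^ 4 / 2 + (n : ℝ) ^ 3 / 3 - n / 30)
        + c₃ * ((n : ℝ) ^ 4 / 4 + (n : ℝ) ^ 3 / 2 + (n : ℝ) ^ 2 / 4)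
        + c₂ * ((n : ℝ) ^ 3 / 3 + (n : ℝ) ^ 2 / 2 + n / 6)
        + c₁ * ((n : ℝ) ^ 2 / 2 + n / 2) + c₀ * n := by
  induction n with
  | zero => simp
  | succ n ih =>
    rw [sum_Icc_succ_top (by omega), ih]
    push_cast
    ring

lemma sum_Icc_abs_sub {b k : ℕ} (hb : b ≤ k) :
    ∑ a ∈ Icc 1 k, |(b : ℝ) - a| = (b : ℝ) ^ 2 - (k + 1) * b + k * (k + 1) / 2 := by
  induction k, hb using Nat.le_induction with
  | base =>
    have hle : ∀ a ∈ Icc 1 b, |(b : ℝ) - a| = b - a := fun a ha =>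
      abs_of_nonneg (sub_nonneg.2 (by exact_mod_cast (mem_Icc.1 ha).2))
    rw [sum_congr rfl hle, sum_sub_distrib, sum_const, Nat.card_Icc, sum_Icc_natCast]
    simp only [add_tsub_cancel_right, nsmul_eq_mul]
    ring
  | succ k hbk ih =>
    have hlt : (b : ℝ) ≤ (k + 1 : ℕ) := by exact_mod_cast hbk.trans k.le_succ
    rw [sum_Icc_succ_top (by omega), ih, abs_of_nonpos (sub_nonpos.2 hlt)]
    push_cast
    ring

lemma sum_Icc_sub_sq (b k : ℕ) :
    ∑ c ∈ Icc 1 k, ((c : ℝ) - b) ^ 2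
      = (k : ℝ) ^ 3 / 3 + (k : ℝ) ^ 2 / 2 + k / 6 - b * ((k : ℝ) ^ 2 + k) + (b : ℝ) ^ 2 * k := by
  have hquartic (c : ℕ) : ((c : ℝ) - b) ^ 2
      = 0 * (c : ℝ) ^ 4 + 0 * (c : ℝ) ^ 3 + 1 * (c : ℝ) ^ 2 + -2 * b * c + (b : ℝ) ^ 2 := by
    ring
  simp_rw [hquartic, sum_Icc_quartic]
  ring

lemma sum_Icc_abs_sub_mul_abs_sub_sq (k : ℕ) :
    ∑ a ∈ Icc 1 k, ∑ b ∈ Icc 1 k, ∑ c ∈ Icc 1 k, |(b : ℝ) - a| * |(c : ℝ) - b| ^ 2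
      = (k : ℝ) ^ 2 * (k - 1) * (k + 1) * (11 * (k : ℝ) ^ 2 - 14) / 180 := by
  have hinner : ∀ b ∈ Icc 1 k, ∑ a ∈ Icc 1 k, ∑ c ∈ Icc 1 k, |(b : ℝ) - a| * |(c : ℝ) - b| ^ 2
      = k * (b : ℝ) ^ 4 + (-2 * (k : ℝ) ^ 2 - 2 * k) * (b : ℝ) ^ 3
        + (11 * (k : ℝ) ^ 3 / 6 + 3 * (k : ℝ) ^ 2 + 7 * k / 6) * (b : ℝ) ^ 2
        + -(5 * (k : ℝ) ^ 4 / 6 + 11 * (k : ℝ) ^ 3 / 6 + 7 * (k : ℝ) ^ 2 / 6 + k / 6) * b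
        + ((k : ℝ) ^ 5 / 6 + 5 * (k : ℝ) ^ 4 / 12 + (k : ℝ) ^ 3 / 3 + (k : ℝ) ^ 2 / 12) := by
    intro b hb
    simp_rw [sq_abs, ← sum_mul_sum, sum_Icc_abs_sub (mem_Icc.1 hb).2, sum_Icc_sub_sq]
    ring
  rw [sum_comm, sum_congr rfl hinner, sum_Icc_quartic]
  ring

theorem cross_moment_T012_uniform
    {Ω : Type*} [MeasurableSpace Ω] (μ : Measure Ω) [IsProbabilityMeasure μ]
    (k : ℕ) (hk : 2 ≤ k) (x : Fin 3 → Ω → ℕ)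
    (hmeas : ∀ i, Measurable (x i))
    (hdist : ∀ i, Measure.map (x i) μ = unifMeasure k)
    (hindep : iIndepFun x μ) :
    ∫ ω, |(x 1 ω : ℝ) - (x 0 ω : ℝ)| * |(x 2 ω : ℝ) - (x 1 ω : ℝ)| ^ 2 ∂μ
      = ((k : ℝ) - 1) * ((k : ℝ) + 1) * (11 * (k : ℝ) ^ 2 - 14) / (180 * (k : ℝ)) := by
  set g : ℕ × ℕ × ℕ → ℝ := fun p => |(p.2.1 : ℝ) - p.1| * |(p.2.2 : ℝ) - p.2.1| ^ 2
  have hlaw : μ.map (fun ω => (x 0 ω, x 1 ω, x 2 ω))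
      = (unifMeasure k).prod ((unifMeasure k).prod (unifMeasure k)) := by
    rw [hindep.map_fin_three_eq_prod hmeas, hdist, hdist, hdist]
  have hk0 : (k : ℝ) ≠ 0 := by exact_mod_cast (by omega : k ≠ 0)
  calc ∫ ω, g (x 0 ω, x 1 ω, x 2 ω) ∂μ
      = ∫ p, g p ∂(μ.map (fun ω => (x 0 ω, x 1 ω, x 2 ω))) :=
        (integral_map ((hmeas 0).prodMk ((hmeas 1).prodMk (hmeas 2))).aemeasurable
          (measurable_of_countable g).aestronglyMeasurable).symm
    _ = _ := by
      rw [hlaw, integral_unifMeasure_prod_prod, sum_Icc_abs_sub_mul_abs_sub_sq]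
      field_simp
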